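/- arXiv:0904.0628 — 2 statements merged into one kernel-verified Lean document; each statement's English description precedes it below -/
import Mathlib

section
/- Assume (n+m)/(4(n+m−1)) ≤ d ≤ (3n+m−2)/(4(n+m−1)). Then the quadruple y_n = (m−3)/4 + ā_n − b_m, y_{n+m} = b_m + a_{n+m} − a_n − (m−1)/4, y_1 = 0, y_{n+1} = a_{n+m} − a_n is such that (1/4, y) is a solution of the four-variable system (S); in particular λ = 1/4 is an eigenvalue of (S). -/
/-!
At `λ = 1/4` the proposed quadruple satisfies `y_n + y_{n+m} = 1/2 - 2 a_n`, so in every equation of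
(S) one alternative of the `min` equals the claimed value identically. It remains to see that the
other alternative is not smaller: in the first and third equations this is exactly the lower and the
upper bound on `(n + m - 1) d = b_n + a_n + b_m + a_{n+m}`, in the other two it holds outright.
-/

open Finset

/-- The four-variable system (S), with variables `y1 = y_1`, `yn = y_n`,
`yn1 = y_{n+1}`, `ynm = y_{n+m}`. -/
def Ssol (n m : ℕ) (a : ℕ → ℝ) (lam y1 yn yn1 ynm : ℝ) : Prop :=
  yn = min ((1 - (a n + a (n + m))) - 2 * lam + y1 + yn1 - ynm)
      ((∑ i ∈ Finset.Icc 1 (n - 1), a i) - ((n : ℝ) - 1) * lam + y1) ∧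
  ynm = min ((1 - (a n + a (n + m))) - lam + y1 + yn1 - yn)
      ((∑ i ∈ Finset.Icc (n + 1) (n + m - 1), a i) - ((m : ℝ) - 1) * lam + yn1) ∧
  y1 = min (a n - lam + (yn + ynm) / 2)
      ((∑ i ∈ Finset.Icc 1 (n - 1), (1 - a i)) - ((n : ℝ) - 1) * lam + yn) ∧
  yn1 = min (a (n + m) - lam + (yn + ynm) / 2)
      ((∑ i ∈ Finset.Icc (n + 1) (n + m - 1), (1 - a i)) - ((m : ℝ) - 1) * lam + ynm)

theorem sum_Icc_one_add_split {M : Type*} [AddCommMonoid M] (f : ℕ → M) {n m : ℕ}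
    (hn : 1 ≤ n) (hm : 1 ≤ m) :
    ∑ i ∈ Icc 1 (n + m), f i =
      ∑ i ∈ Icc 1 (n - 1), f i + f n + ∑ i ∈ Icc (n + 1) (n + m - 1), f i + f (n + m) := by
  obtain ⟨k, rfl⟩ := Nat.exists_eq_add_of_le' hn
  obtain ⟨l, rfl⟩ := Nat.exists_eq_add_of_le' hm
  have hIcc_one (N : ℕ) : Icc 1 N = Ioc 0 N := Icc_add_one_left_eq_Ioc 0 N
  rw [Nat.add_sub_cancel, show k + 1 + (l + 1) - 1 = k + 1 + l by omega, ← add_assoc,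
    sum_Icc_succ_top (by omega), hIcc_one, hIcc_one, Icc_add_one_left_eq_Ioc,
    ← sum_Ioc_consecutive _ (Nat.zero_le (k + 1)) (Nat.le_add_right _ l),
    sum_Ioc_succ_top (Nat.zero_le k)]

theorem sum_Icc_one_sub (f : ℕ → ℝ) {a b : ℕ} (h : a ≤ b + 1) :
    ∑ i ∈ Icc a b, (1 - f i) = ((b : ℝ) + 1 - a) - ∑ i ∈ Icc a b, f i := by
  rw [sum_sub_distrib, sum_const, Nat.card_Icc, nsmul_one, Nat.cast_sub h]
  push_cast
  ring

theorem stmt7_general (n m : ℕ) (hn : 2 ≤ n) (hm : 2 ≤ m) (a : ℕ → ℝ)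
    (d : ℝ) (hd : d = (∑ i ∈ Finset.Icc 1 (n + m), a i) / ((n : ℝ) + (m : ℝ) - 1))
    (hd1 : ((n : ℝ) + (m : ℝ)) / (4 * ((n : ℝ) + (m : ℝ) - 1)) ≤ d)
    (hd2 : d ≤ (3 * (n : ℝ) + (m : ℝ) - 2) / (4 * ((n : ℝ) + (m : ℝ) - 1))) :
    Ssol n m a (1 / 4) 0
      (((m : ℝ) - 3) / 4 + (1 - (a n + a (n + m)))
        - (∑ i ∈ Finset.Icc (n + 1) (n + m - 1), a i))
      (a (n + m) - a n)
      ((∑ i ∈ Finset.Icc (n + 1) (n + m - 1), a i) + a (n + m) - a n - ((m : ℝ) - 1) / 4) := by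
  have hn' : (2 : ℝ) ≤ n := by exact_mod_cast hn
  have hm' : (2 : ℝ) ≤ m := by exact_mod_cast hm
  have hpos : (0 : ℝ) < n + m - 1 := by linarith
  rw [hd, sum_Icc_one_add_split a (by omega) (by omega), ← div_div,
    div_le_div_iff_of_pos_right hpos] at hd1 hd2
  have hcompl_n : ∑ i ∈ Icc 1 (n - 1), (1 - a i) = ((n : ℝ) - 1) - ∑ i ∈ Icc 1 (n - 1), a i := by
    rw [sum_Icc_one_sub a (by omega), Nat.cast_sub (by omega)]
    push_cast
    ring
  have hcompl_m : ∑ i ∈ Icc (n + 1) (n + m - 1), (1 - a i) =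
      ((m : ℝ) - 1) - ∑ i ∈ Icc (n + 1) (n + m - 1), a i := by
    rw [sum_Icc_one_sub a (by omega), Nat.cast_sub (by omega)]
    push_cast
    ring
  refine ⟨?_, ?_, ?_, ?_⟩
  · rw [min_eq_left (by linarith)]; ring
  · rw [min_eq_right (by linarith)]; ring
  · rw [hcompl_n, min_eq_left (by linarith)]; ring
  · rw [hcompl_m, min_eq_left (by linarith)]; ring

theorem stmt7 (n m : ℕ) (hn : 2 ≤ n) (hm : 2 ≤ m) (a : ℕ → ℝ)
    (ha : ∀ i : ℕ, 1 ≤ i → i ≤ n + m → 0 ≤ a i ∧ a i ≤ 1)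
    (hprio : a n + a (n + m) ≤ 1)
    (d : ℝ) (hd : d = (∑ i ∈ Finset.Icc 1 (n + m), a i) / ((n : ℝ) + (m : ℝ) - 1))
    (hd1 : ((n : ℝ) + (m : ℝ)) / (4 * ((n : ℝ) + (m : ℝ) - 1)) ≤ d)
    (hd2 : d ≤ (3 * (n : ℝ) + (m : ℝ) - 2) / (4 * ((n : ℝ) + (m : ℝ) - 1))) :
    Ssol n m a (1 / 4) 0
      (((m : ℝ) - 3) / 4 + (1 - (a n + a (n + m)))
        - (∑ i ∈ Finset.Icc (n + 1) (n + m - 1), a i))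
      (a (n + m) - a n)
      ((∑ i ∈ Finset.Icc (n + 1) (n + m - 1), a i) + a (n + m) - a n - ((m : ℝ) - 1) / 4) :=
  stmt7_general n m hn hm a d hd hd1 hd2
end

section
/- Assume r > 1/2 (equivalently n ≥ m) and 0 < d < r. Then the four-variable system (S) admits a unique positive eigenvalue λ, given by λ = min( d/(1+ρ), 1/4, (r−d)/(2r−1+ρ) ), and this value is strictly positive. -/
open Finset

theorem eq_min_iff_le_le_or {α : Type*} [LinearOrder α] {x a b : α} :
    x = min a b ↔ x ≤ a ∧ x ≤ b ∧ (x = a ∨ x = b) := by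
  constructor
  · rintro rfl
    exact ⟨min_le_left a b, min_le_right a b, min_choice a b⟩
  · rintro ⟨hxa, hxb, rfl | rfl⟩
    · exact (min_eq_left hxb).symm
    · exact (min_eq_right hxa).symm

theorem eq_min_div_iff {x S T D₁ D₃ : ℝ} (hD₁ : 0 < D₁) (hD₃ : 0 < D₃) :
    x = min (S / D₁) (min (1 / 4) (T / D₃)) ↔
      (x * D₁ ≤ S ∧ x ≤ 1 / 4 ∧ x * D₃ ≤ T) ∧
        (x * D₁ = S ∨ x = 1 / 4 ∨ x * D₃ = T) := by
  simp only [eq_min_iff_le_le_or, le_div_iff₀ hD₁, le_div_iff₀ hD₃, eq_div_iff hD₁.ne',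
    eq_div_iff hD₃.ne', le_min_iff]
  tauto

theorem sum_one_sub {ι R : Type*} [Ring R] (s : Finset ι) (f : ι → R) :
    ∑ i ∈ s, (1 - f i) = #s - ∑ i ∈ s, f i := by
  simp [sum_sub_distrib]

theorem sum_Icc_split {M : Type*} [AddCommMonoid M] (f : ℕ → M) {n m : ℕ} (hn : 1 ≤ n)
    (hm : 1 ≤ m) :
    ∑ i ∈ Icc 1 (n + m), f i =
      (∑ i ∈ Icc 1 (n - 1), f i) + f n + (∑ i ∈ Icc (n + 1) (n + m - 1), f i) +
        f (n + m) := by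
  obtain ⟨k, rfl⟩ := Nat.exists_eq_add_of_le' hn
  obtain ⟨l, rfl⟩ := Nat.exists_eq_add_of_le' hm
  have hIcc : ∀ x, Icc 1 x = Ioc 0 x := Icc_add_one_left_eq_Ioc 0
  rw [show k + 1 + (l + 1) = k + 1 + l + 1 by omega, sum_Icc_succ_top (by omega),
    show k + 1 + l + 1 - 1 = k + 1 + l by omega, hIcc, Icc_add_one_left_eq_Ioc,
    ← sum_Ioc_consecutive f (Nat.zero_le (k + 1)) (by omega : k + 1 ≤ k + 1 + l),
    ← hIcc, sum_Icc_succ_top (by omega), Nat.add_sub_cancel]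

/-- System (S) with the data as free real parameters: `p = n - 1`, `q = m - 1`, `bn = b_n`,
`bm = b_m`, `an = a_n`, `am = a_{n+m}`; then `b̄_n = p - bn` and `b̄_m = q - bm`. -/
def MinPlusSystem (p q bn bm an am lam y1 yn yn1 ynm : ℝ) : Prop :=
  yn = min ((1 - (an + am)) - 2 * lam + y1 + yn1 - ynm) (bn - p * lam + y1) ∧
  ynm = min ((1 - (an + am)) - lam + y1 + yn1 - yn) (bm - q * lam + yn1) ∧
  y1 = min (an - lam + (yn + ynm) / 2) ((p - bn) - p * lam + yn) ∧
  yn1 = min (am - lam + (yn + ynm) / 2) ((q - bm) - q * lam + ynm)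

theorem ssol_iff_minPlusSystem {n m : ℕ} (hn : 1 ≤ n) (hm : 1 ≤ m) (a : ℕ → ℝ)
    (lam y1 yn yn1 ynm : ℝ) :
    Ssol n m a lam y1 yn yn1 ynm ↔
      MinPlusSystem ((n : ℝ) - 1) ((m : ℝ) - 1) (∑ i ∈ Icc 1 (n - 1), a i)
        (∑ i ∈ Icc (n + 1) (n + m - 1), a i) (a n) (a (n + m)) lam y1 yn yn1 ynm := by
  have hcard_n : ((#(Icc 1 (n - 1)) : ℕ) : ℝ) = (n : ℝ) - 1 := by
    rw [Nat.card_Icc, Nat.add_sub_cancel, Nat.cast_pred hn]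
  have hcard_m : ((#(Icc (n + 1) (n + m - 1)) : ℕ) : ℝ) = (m : ℝ) - 1 := by
    rw [Nat.card_Icc, show n + m - 1 + 1 - (n + 1) = m - 1 by omega, Nat.cast_pred hm]
  rw [Ssol, MinPlusSystem, sum_one_sub, sum_one_sub, hcard_n, hcard_m]

namespace MinPlusSystem

variable {p q bn bm an am lam y1 yn yn1 ynm : ℝ}

theorem lam_le_quarter (h : MinPlusSystem p q bn bm an am lam y1 yn yn1 ynm) : lam ≤ 1 / 4 := by
  obtain ⟨h₁, -, h₃, h₄⟩ := h
  have := h₁.le.trans (min_le_left _ _)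
  have := h₃.le.trans (min_le_left _ _)
  have := h₄.le.trans (min_le_left _ _)
  linarith

theorem ynm_eq_of_pos (h : MinPlusSystem p q bn bm an am lam y1 yn yn1 ynm)
    (hlam : 0 < lam) : ynm = bm - q * lam + yn1 := by
  obtain ⟨h₁, h₂, -, -⟩ := h
  have := h₁.le.trans (min_le_left _ _)
  rcases (eq_min_iff_le_le_or.1 h₂).2.2 with h₂ | h₂
  · linarith
  · exact h₂

theorem yn1_eq_of_pos (h : MinPlusSystem p q bn bm an am lam y1 yn yn1 ynm)
    (hq : 0 < q) (hlam : 0 < lam) : yn1 = am - lam + (yn + ynm) / 2 := by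
  have h₂ := h.ynm_eq_of_pos hlam
  have hq' : 0 < q * (1 - 2 * lam) := mul_pos hq (by linarith [h.lam_le_quarter])
  rcases (eq_min_iff_le_le_or.1 h.2.2.2).2.2 with h₄ | h₄
  · exact h₄
  · linarith

theorem lam_le_and_eq (h : MinPlusSystem p q bn bm an am lam y1 yn yn1 ynm)
    (hp : 0 < p) (hq : 0 < q) (hlam : 0 < lam) :
    (lam * (p + q + 2) ≤ bn + an + bm + am ∧ lam ≤ 1 / 4 ∧
        lam * (p - q + 2) ≤ p + 1 - (bn + an + bm + am)) ∧
      (lam * (p + q + 2) = bn + an + bm + am ∨ lam = 1 / 4 ∨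
        lam * (p - q + 2) = p + 1 - (bn + an + bm + am)) := by
  have hquarter := h.lam_le_quarter
  have h₂ := h.ynm_eq_of_pos hlam
  have h₄ := h.yn1_eq_of_pos hq hlam
  have hp' : 0 < p * (1 - 2 * lam) := mul_pos hp (by linarith)
  obtain ⟨h₁, -, h₃, -⟩ := h
  obtain ⟨h₁l, h₁r, h₁e⟩ := eq_min_iff_le_le_or.1 h₁
  obtain ⟨h₃l, h₃r, h₃e⟩ := eq_min_iff_le_le_or.1 h₃
  refine ⟨⟨by linarith, hquarter, by linarith⟩, ?_⟩
  rcases h₁e with h₁e | h₁e <;> rcases h₃e with h₃e | h₃e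
  · exact Or.inr (Or.inl (by linarith))
  · exact Or.inr (Or.inr (by linarith))
  · exact Or.inl (by linarith)
  · linarith

end MinPlusSystem

theorem exists_minPlusSystem_of_le_of_eq {p q bn bm an am lam : ℝ} (hp : 0 ≤ p) (hq : 0 ≤ q)
    (hlam : 0 < lam)
    (hle : lam * (p + q + 2) ≤ bn + an + bm + am ∧ lam ≤ 1 / 4 ∧
        lam * (p - q + 2) ≤ p + 1 - (bn + an + bm + am))
    (heq : lam * (p + q + 2) = bn + an + bm + am ∨ lam = 1 / 4 ∨
        lam * (p - q + 2) = p + 1 - (bn + an + bm + am)) :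
    ∃ y1 yn yn1 ynm, MinPlusSystem p q bn bm an am lam y1 yn yn1 ynm := by
  obtain ⟨hle₁, hle₂, hle₃⟩ := hle
  have hp' : 0 ≤ p * (1 - 2 * lam) := mul_nonneg hp (by linarith)
  have hq' : 0 ≤ q * (1 - 2 * lam) := mul_nonneg hq (by linarith)
  -- (S) is invariant under a common shift of the `y`'s, so take `y_{n+1} = 0`; the forced branches
  -- of the second and fourth equations then determine `y_{n+m}` and `y_n`, and the third `y_1`.
  set yn := (q + 2) * lam - 2 * am - bm
  set ynm := bm - q * lam
  set y1 := min (an - am) ((p - bn) - p * lam + yn) with hy1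
  obtain ⟨hy1l, hy1r, hy1e⟩ := eq_min_iff_le_le_or.1 hy1
  have hy1_ge₁ : yn - (1 - (an + am)) + 2 * lam + ynm ≤ y1 :=
    le_min (by linarith) (by linarith)
  have hy1_ge₂ : yn - bn + p * lam ≤ y1 := le_min (by linarith) (by linarith)
  refine ⟨y1, yn, 0, ynm, ?_, ?_, ?_, ?_⟩ <;> rw [eq_min_iff_le_le_or]
  · refine ⟨by linarith, by linarith, ?_⟩
    rcases heq with h | h | h
    · right; linarith
    · left; linarith
    · left; linarith
  · exact ⟨by linarith, by linarith, Or.inr (by linarith)⟩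
  · refine ⟨by linarith, by linarith, ?_⟩
    rcases hy1e with h | h
    · left; linarith
    · right; linarith
  · exact ⟨by linarith, by linarith, Or.inl (by linarith)⟩

theorem exists_minPlusSystem_iff {p q bn bm an am lam : ℝ} (hp : 0 < p) (hq : 0 < q)
    (hpq : 0 < p - q + 2) (hlam : 0 < lam) :
    (∃ y1 yn yn1 ynm, MinPlusSystem p q bn bm an am lam y1 yn yn1 ynm) ↔
      lam = min ((bn + an + bm + am) / (p + q + 2))
        (min (1 / 4) ((p + 1 - (bn + an + bm + am)) / (p - q + 2))) := by
  rw [eq_min_div_iff (by linarith) hpq]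
  exact ⟨fun ⟨_, _, _, _, h⟩ => h.lam_le_and_eq hp hq hlam,
    fun ⟨hle, heq⟩ => exists_minPlusSystem_of_le_of_eq hp.le hq.le hlam hle heq⟩

theorem min_eigenvalue_formula_eq {n m S d r ρ : ℝ} (hN : 0 < n + m - 1)
    (hd : d = S / (n + m - 1)) (hr : r = n / (n + m - 1)) (hρ : ρ = 1 / (n + m - 1)) :
    min (d / (1 + ρ)) (min (1 / 4) ((r - d) / (2 * r - 1 + ρ))) =
      min (S / ((n - 1) + (m - 1) + 2))
        (min (1 / 4) (((n - 1) + 1 - S) / ((n - 1) - (m - 1) + 2))) := by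
  have hN' : n + m - 1 ≠ 0 := hN.ne'
  have e₁ : 1 + ρ = ((n - 1) + (m - 1) + 2) / (n + m - 1) := by
    rw [hρ]
    field_simp
    ring
  have e₂ : r - d = ((n - 1) + 1 - S) / (n + m - 1) := by
    rw [hr, hd]
    ring
  have e₃ : 2 * r - 1 + ρ = ((n - 1) - (m - 1) + 2) / (n + m - 1) := by
    rw [hr, hρ]
    field_simp
    ring
  rw [e₁, e₂, e₃, hd, div_div_div_cancel_right₀ hN', div_div_div_cancel_right₀ hN']

theorem stmt16_general (n m : ℕ) (hn : 2 ≤ n) (hm : 2 ≤ m) (a : ℕ → ℝ)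
    (d r ρ : ℝ) (hd : d = (∑ i ∈ Finset.Icc 1 (n + m), a i) / ((n : ℝ) + (m : ℝ) - 1))
    (hr : r = (n : ℝ) / ((n : ℝ) + (m : ℝ) - 1))
    (hρ : ρ = 1 / ((n : ℝ) + (m : ℝ) - 1))
    (hr2 : 1 / 2 < r) (hd0 : 0 < d) (hdr : d < r)
    (lam : ℝ)
    (hlam : lam = min (d / (1 + ρ)) (min (1 / 4) ((r - d) / (2 * r - 1 + ρ)))) :
    0 < lam ∧ (∃ y1 yn yn1 ynm : ℝ, Ssol n m a lam y1 yn yn1 ynm) ∧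
      ∀ lam' : ℝ, 0 < lam' →
        (∃ y1 yn yn1 ynm : ℝ, Ssol n m a lam' y1 yn yn1 ynm) → lam' = lam := by
  have hn' : (2 : ℝ) ≤ n := by exact_mod_cast hn
  have hm' : (2 : ℝ) ≤ m := by exact_mod_cast hm
  have hN : (0 : ℝ) < n + m - 1 := by linarith
  have hρ0 : 0 < ρ := hρ ▸ by positivity
  have hpos : 0 < lam :=
    hlam ▸ lt_min (by positivity) (lt_min (by norm_num) (div_pos (by linarith) (by linarith)))
  have hpq : (0 : ℝ) < (n - 1) - (m - 1) + 2 := by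
    rw [hr, lt_div_iff₀ hN] at hr2
    linarith
  rw [sum_Icc_split a (by omega) (by omega)] at hd
  have hcrit := hlam.trans (min_eigenvalue_formula_eq hN hd hr hρ)
  have hspec : ∀ lam', 0 < lam' →
      ((∃ y1 yn yn1 ynm : ℝ, Ssol n m a lam' y1 yn yn1 ynm) ↔ lam' = lam) := by
    intro lam' hlam'
    simp only [ssol_iff_minPlusSystem (by omega : 1 ≤ n) (by omega : 1 ≤ m)]
    rw [hcrit]
    exact exists_minPlusSystem_iff (by linarith) (by linarith) hpq hlam'
  exact ⟨hpos, (hspec lam hpos).2 rfl, fun lam' hlam' h => (hspec lam' hlam').1 h⟩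

theorem stmt16 (n m : ℕ) (hn : 2 ≤ n) (hm : 2 ≤ m) (a : ℕ → ℝ)
    (ha : ∀ i : ℕ, 1 ≤ i → i ≤ n + m → 0 ≤ a i ∧ a i ≤ 1)
    (hprio : a n + a (n + m) ≤ 1)
    (d r ρ : ℝ) (hd : d = (∑ i ∈ Finset.Icc 1 (n + m), a i) / ((n : ℝ) + (m : ℝ) - 1))
    (hr : r = (n : ℝ) / ((n : ℝ) + (m : ℝ) - 1))
    (hρ : ρ = 1 / ((n : ℝ) + (m : ℝ) - 1))
    (hr2 : 1 / 2 < r) (hd0 : 0 < d) (hdr : d < r)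
    (lam : ℝ)
    (hlam : lam = min (d / (1 + ρ)) (min (1 / 4) ((r - d) / (2 * r - 1 + ρ)))) :
    0 < lam ∧ (∃ y1 yn yn1 ynm : ℝ, Ssol n m a lam y1 yn yn1 ynm) ∧
      ∀ lam' : ℝ, 0 < lam' →
        (∃ y1 yn yn1 ynm : ℝ, Ssol n m a lam' y1 yn yn1 ynm) → lam' = lam :=
  stmt16_general n m hn hm a d r ρ hd hr hρ hr2 hd0 hdr lam hlam
end
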